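/- Let d, Q ≥ 1 and 0 < r < Q be integers, and for 1 ≤ i ≤ j ≤ Q let L[i,j] = |{i, i+1, …, j} ∩ {⌈Q/r⌉, ⌈2Q/r⌉, …, ⌈(r−1)Q/r⌉, Q}|. Then for every 1 ≤ i ≤ Q, the set S = σ_i ∪ σ_{i+1} ∪ … ∪ σ_Q satisfies dens_{T_r}(S) = 2^d + (2^d − 1)·L[i,Q] / (d(Q − i + 1)). -/

import Mathlib

/-- The block `σ_i = {id+1, id+2, …, (i+1)d}` of vertices. -/
def sigmaB (d i : ℕ) : Finset ℕ := Finset.Icc (i * d + 1) ((i + 1) * d)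

/-- The `d`-tree `T_0` on vertex set `{1, …, d(Q+1)}`: its simplices are the nonempty
subsets `σ` with `max σ − min σ ≤ d` (equivalently, `a ≤ b + d` for all `a, b ∈ σ`). -/
def T0 (d Q : ℕ) : Finset (Finset ℕ) :=
  (Finset.Icc 1 (d * (Q + 1))).powerset.filter
    (fun σ => σ.Nonempty ∧ ∀ a ∈ σ, ∀ b ∈ σ, a ≤ b + d)

/-- The `k`-th attached root vertex (for `k = 0, 1, …`): a fresh vertex label. -/
def rootVtx (d Q k : ℕ) : ℕ := d * (Q + 1) + k + 1

/-- The index of the block to which the `k`-th root vertex is attached in `T_r`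
(`k = 0, …, r−1`).  Writing `r = aQ + b` with `b = r % Q`, the first `b` vertices are
attached to `σ_{⌈Q/b⌉}, σ_{⌈2Q/b⌉}, …, σ_{⌈bQ/b⌉} = σ_Q` (coming from the base case
`T_b`), and the remaining `aQ` vertices are attached cyclically to `σ_1, …, σ_Q`
(`a` full rounds), corresponding to the recursion `T_r = T_{r−Q} + (σ_1, …, σ_Q)`. -/
def target (Q r k : ℕ) : ℕ :=
  if k < r % Q then ((k + 1) * Q + (r % Q) - 1) / (r % Q)
  else (k - r % Q) % Q + 1

/-- The rooted `d`-tree `T_r`: the complex `T_0` together with, for each `k < r`, the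
root vertex `rootVtx d Q k` attached to the `(d−1)`-simplex `σ_{target Q r k}`
(attaching adds all sets `τ ∪ {v}` for `τ ⊆ σ`). -/
def Tr (d Q r : ℕ) : Finset (Finset ℕ) :=
  T0 d Q ∪ (Finset.range r).biUnion
    (fun k => (sigmaB d (target Q r k)).powerset.image (insert (rootVtx d Q k)))

/-- The set of vertex roots of `T_r`. -/
def rootSet (d Q r : ℕ) : Finset ℕ := (Finset.range r).image (rootVtx d Q)

/-- `e_C(S)`: the number of nonempty simplices of `C` with at least one vertex in `S`. -/
def eCount (C : Finset (Finset ℕ)) (S : Finset ℕ) : ℕ :=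
  (C.filter (fun σ => σ.Nonempty ∧ (σ ∩ S).Nonempty)).card

/-- The density `dens_C(S) = e_C(S)/|S|`. -/
noncomputable def dens (C : Finset (Finset ℕ)) (S : Finset ℕ) : ℝ :=
  (eCount C S : ℝ) / (S.card : ℝ)

/-- The vertex set of a complex. -/
def verts (C : Finset (Finset ℕ)) : Finset ℕ := C.sup id

/-- The unrooted vertices of `T_r`: all vertices except the simplex root `σ_0` and the
vertex roots. -/
def unrooted (d Q r : ℕ) : Finset ℕ :=
  verts (Tr d Q r) \ (sigmaB d 0 ∪ rootSet d Q r)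

/-- `L[i,j] = |{i, i+1, …, j} ∩ {⌈Q/r⌉, ⌈2Q/r⌉, …, ⌈(r−1)Q/r⌉, Q}|`
(note `⌈rQ/r⌉ = Q`, and `⌈x/r⌉ = (x + r − 1)/r` in natural arithmetic). -/
def Lfun (Q r i j : ℕ) : ℕ :=
  (Finset.Icc i j ∩ (Finset.Icc 1 r).image (fun k => (k * Q + r - 1) / r)).card

/-!
The set `S = σ_i ∪ … ∪ σ_Q` is the upper interval `{id+1, …, d(Q+1)}` of the vertices
of `T_0`. A simplex of `T_0` meets an upper interval iff its largest vertex lies in it, and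
for every `M > d` exactly `2^d` simplices of `T_0` have largest vertex `M`; so `T_0`
contributes `2^d |S|`. The cone attached over `σ_t` contributes `2^d - 1` simplices if
`σ_t ⊆ S`, i.e. `t ≥ i`, and none otherwise; the `k`-th root is attached over
`σ_{⌈(k+1)Q/r⌉}`, so `L[i,Q]` cones are counted.
-/

section

open Finset

section Cones

variable {α : Type*} [DecidableEq α]

theorem injOn_insert_powerset {v : α} {A : Finset α} (hv : v ∉ A) :
    Set.InjOn (insert v) (A.powerset : Set (Finset α)) := by
  intro τ hτ τ' hτ' h
  rw [mem_coe, mem_powerset] at hτ hτ'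
  rw [← erase_insert (fun h' => hv (hτ h')), ← erase_insert (fun h' => hv (hτ' h'))]
  exact congrArg (·.erase v) h

theorem mem_of_mem_image_insert {v : α} {s : Finset (Finset α)} {σ : Finset α}
    (h : σ ∈ s.image (insert v)) : v ∈ σ := by
  obtain ⟨τ, -, rfl⟩ := mem_image.1 h
  exact mem_insert_self v τ

theorem subset_insert_of_mem_image_insert_powerset {v : α} {A σ : Finset α}
    (h : σ ∈ A.powerset.image (insert v)) : σ ⊆ insert v A := by
  obtain ⟨τ, hτ, rfl⟩ := mem_image.1 h
  exact insert_subset_insert v (mem_powerset.1 hτ)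

theorem disjoint_image_insert_powerset {v w : α} {A B : Finset α} (hvw : v ≠ w)
    (hvB : v ∉ B) :
    Disjoint (A.powerset.image (insert v)) (B.powerset.image (insert w)) := by
  refine disjoint_left.2 fun σ hσ hσ' => ?_
  have := subset_insert_of_mem_image_insert_powerset hσ' (mem_of_mem_image_insert hσ)
  rcases mem_insert.1 this with h | h
  exacts [hvw h, hvB h]

theorem card_powerset_filter_inter_nonempty (A S : Finset α) :
    #(A.powerset.filter fun τ => (τ ∩ S).Nonempty) = 2 ^ #A - 2 ^ #(A \ S) := by
  have : A.powerset.filter (fun τ => (τ ∩ S).Nonempty) = A.powerset \ (A \ S).powerset := by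
    ext τ
    simp only [mem_filter, mem_sdiff, mem_powerset, subset_sdiff, disjoint_iff_inter_eq_empty,
      nonempty_iff_ne_empty]
    tauto
  rw [this, card_sdiff_of_subset (powerset_mono.2 sdiff_subset), card_powerset, card_powerset]

end Cones

theorem eCount_union {C D : Finset (Finset ℕ)} (h : Disjoint C D) (S : Finset ℕ) :
    eCount (C ∪ D) S = eCount C S + eCount D S := by
  rw [eCount, filter_union, card_union_of_disjoint (disjoint_filter_filter h)]; rfl

theorem eCount_biUnion {ι : Type*} {s : Finset ι} {C : ι → Finset (Finset ℕ)}
    (h : (s : Set ι).PairwiseDisjoint C) (S : Finset ℕ) :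
    eCount (s.biUnion C) S = ∑ k ∈ s, eCount (C k) S := by
  rw [eCount, filter_biUnion, card_biUnion]
  · rfl
  · exact fun k hk l hl hkl => disjoint_filter_filter (h hk hl hkl)

theorem eCount_image_insert_powerset {v : ℕ} {A S : Finset ℕ} (hvA : v ∉ A) (hvS : v ∉ S) :
    eCount (A.powerset.image (insert v)) S = 2 ^ #A - 2 ^ #(A \ S) := by
  rw [eCount, filter_image, card_image_of_injOn ((injOn_insert_powerset hvA).mono
    (coe_subset.2 (filter_subset _ _))), ← card_powerset_filter_inter_nonempty]
  congr 1
  refine filter_congr fun τ _ => ?_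
  simp only [insert_nonempty, true_and, insert_inter_of_notMem hvS]

theorem biUnion_sigmaB_Icc (d i j : ℕ) :
    (Icc i j).biUnion (sigmaB d) = Icc (i * d + 1) ((j + 1) * d) := by
  ext x
  simp only [mem_biUnion, mem_Icc, sigmaB]
  constructor
  · rintro ⟨m, ⟨him, hmj⟩, hx1, hx2⟩
    exact ⟨le_trans (by gcongr) hx1, hx2.trans (by gcongr)⟩
  · rintro ⟨hx1, hx2⟩
    have hd : 0 < d := Nat.pos_of_ne_zero fun h => by simp [h] at hx1 hx2; omega
    refine ⟨(x - 1) / d, ⟨?_, ?_⟩, ?_, ?_⟩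
    · exact (Nat.le_div_iff_mul_le hd).2 (by omega)
    · have := (Nat.div_lt_iff_lt_mul hd).2 (by omega : x - 1 < (j + 1) * d); omega
    · have := Nat.div_mul_le_self (x - 1) d; omega
    · have := Nat.lt_mul_div_succ (x - 1) hd; rw [mul_comm] at this; omega

theorem card_sigmaB (d t : ℕ) : #(sigmaB d t) = d := by
  simp [sigmaB, add_mul]

theorem sigmaB_subset_Icc {d t Q : ℕ} (ht : t ≤ Q) : sigmaB d t ⊆ Icc 1 (d * (Q + 1)) := by
  intro x hx
  rw [sigmaB, mem_Icc] at hx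
  rw [mem_Icc, mul_comm d]
  exact ⟨by omega, hx.2.trans (by gcongr)⟩

theorem disjoint_sigmaB_Icc {d t i N : ℕ} (hti : t < i) :
    Disjoint (sigmaB d t) (Icc (i * d + 1) N) := by
  refine disjoint_left.2 fun x hx hx' => ?_
  rw [sigmaB, mem_Icc] at hx
  have : (t + 1) * d ≤ i * d := by gcongr; omega
  exact absurd (mem_Icc.1 hx').1 (by omega)

theorem T0_filter_meets_Icc (d Q : ℕ) {a : ℕ} (hda : d < a) :
    (T0 d Q).filter (fun σ => σ.Nonempty ∧ (σ ∩ Icc a (d * (Q + 1))).Nonempty) =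
      (Icc a (d * (Q + 1))).biUnion fun M => (Ico (M - d) M).powerset.image (insert M) := by
  ext σ
  simp only [T0, mem_filter, mem_powerset, mem_biUnion, mem_image]
  constructor
  · rintro ⟨⟨hσN, hne, hdiam⟩, -, y, hy⟩
    rw [mem_inter] at hy
    set M := σ.max' hne
    have hMσ : M ∈ σ := σ.max'_mem hne
    refine ⟨M, ?_, σ.erase M, fun x hx => ?_, insert_erase hMσ⟩
    · exact mem_Icc.2 ⟨(mem_Icc.1 hy.2).1.trans (σ.le_max' y hy.1), (mem_Icc.1 (hσN hMσ)).2⟩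
    · have hxσ := mem_of_mem_erase hx
      have := lt_of_le_of_ne (σ.le_max' x hxσ) (ne_of_mem_erase hx)
      have := hdiam M hMσ x hxσ
      exact mem_Ico.2 ⟨by omega, by omega⟩
  · rintro ⟨M, hM, τ, hτ, rfl⟩
    rw [mem_Icc] at hM
    have hτ' : ∀ x ∈ insert M τ, M - d ≤ x ∧ x ≤ M := fun x hx => by
      rcases mem_insert.1 hx with rfl | hx
      · omega
      · have := mem_Ico.1 (hτ hx); omega
    refine ⟨⟨fun x hx => ?_, insert_nonempty M τ, fun x hx y hy => ?_⟩,
      insert_nonempty M τ, M, mem_inter.2 ⟨mem_insert_self M τ, mem_Icc.2 hM⟩⟩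
    · have := hτ' x hx; exact mem_Icc.2 ⟨by omega, by omega⟩
    · have := hτ' x hx; have := hτ' y hy; omega

theorem eCount_T0_Icc (d Q : ℕ) {a : ℕ} (hda : d < a) :
    eCount (T0 d Q) (Icc a (d * (Q + 1))) = (d * (Q + 1) + 1 - a) * 2 ^ d := by
  rw [eCount, T0_filter_meets_Icc d Q hda, card_biUnion, sum_const_nat, Nat.card_Icc]
  · intro M hM
    rw [card_image_of_injOn (injOn_insert_powerset (by simp)), card_powerset, Nat.card_Ico]
    congr 1
    have := (mem_Icc.1 hM).1
    omega
  · intro M _ M' _ hMM'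
    refine disjoint_left.2 fun σ hσ hσ' => ?_
    have h := subset_insert_of_mem_image_insert_powerset hσ' (mem_of_mem_image_insert hσ)
    have h' := subset_insert_of_mem_image_insert_powerset hσ (mem_of_mem_image_insert hσ')
    simp only [mem_insert, mem_Ico] at h h'
    omega

theorem rootVtx_notMem_Icc (d Q k a : ℕ) : rootVtx d Q k ∉ Icc a (d * (Q + 1)) := by
  simp [rootVtx]

theorem eCount_Tr {d Q r : ℕ} (htarget : ∀ k < r, target Q r k ≤ Q) (S : Finset ℕ) :
    eCount (Tr d Q r) S = eCount (T0 d Q) S + ∑ k ∈ range r,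
      eCount ((sigmaB d (target Q r k)).powerset.image (insert (rootVtx d Q k))) S := by
  rw [Tr, eCount_union, eCount_biUnion]
  · intro k _ l hl hkl
    exact disjoint_image_insert_powerset (by simpa [rootVtx] using hkl)
      fun h => rootVtx_notMem_Icc d Q k 1 (sigmaB_subset_Icc (htarget l (mem_range.1 hl)) h)
  · refine disjoint_left.2 fun σ hσ hσ' => ?_
    obtain ⟨k, -, hk⟩ := mem_biUnion.1 hσ'
    exact rootVtx_notMem_Icc d Q k 1
      (mem_powerset.1 (mem_filter.1 hσ).1 (mem_of_mem_image_insert hk))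

theorem eCount_image_insert_powerset_sigmaB {d Q t v : ℕ} (i : ℕ) (ht : t ≤ Q)
    (hv : v ∉ Icc 1 (d * (Q + 1))) :
    eCount ((sigmaB d t).powerset.image (insert v)) (Icc (i * d + 1) (d * (Q + 1))) =
      if i ≤ t then 2 ^ d - 1 else 0 := by
  have hvS : v ∉ Icc (i * d + 1) (d * (Q + 1)) := fun h => hv (Icc_subset_Icc_left (by omega) h)
  rw [eCount_image_insert_powerset (fun h => hv (sigmaB_subset_Icc ht h)) hvS, card_sigmaB]
  split_ifs with hit
  · have : sigmaB d t ⊆ Icc (i * d + 1) (d * (Q + 1)) := by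
      rw [mul_comm d, ← biUnion_sigmaB_Icc]
      exact subset_biUnion_of_mem _ (mem_Icc.2 ⟨hit, ht⟩)
    rw [sdiff_eq_empty_iff_subset.2 this, card_empty, pow_zero]
  · rw [sdiff_eq_self_of_disjoint (disjoint_sigmaB_Icc (by omega)), card_sigmaB, Nat.sub_self]

theorem strictMono_ceil_mul_div {Q r : ℕ} (hr : 0 < r) (hrQ : r ≤ Q) :
    StrictMono fun j => (j * Q + r - 1) / r := by
  refine strictMono_nat_of_lt_succ fun j => ?_
  calc (j * Q + r - 1) / r < (j * Q + r - 1) / r + 1 := Nat.lt_succ_self _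
    _ = (j * Q + r - 1 + r) / r := (Nat.add_div_right _ hr).symm
    _ ≤ ((j + 1) * Q + r - 1) / r := Nat.div_le_div_right (by rw [add_one_mul]; omega)

theorem ceil_mul_div_self {Q r : ℕ} (hr : 0 < r) : (r * Q + r - 1) / r = Q := by
  rw [Nat.add_sub_assoc hr, Nat.mul_add_div hr, Nat.div_eq_of_lt (by omega), add_zero]

theorem target_eq {Q r k : ℕ} (hrQ : r < Q) (hk : k < r) :
    target Q r k = ((k + 1) * Q + r - 1) / r := by
  rw [target, Nat.mod_eq_of_lt hrQ, if_pos hk]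

theorem target_le {Q r k : ℕ} (hr : 0 < r) (hrQ : r < Q) (hk : k < r) : target Q r k ≤ Q := by
  rw [target_eq hrQ hk]
  exact ((strictMono_ceil_mul_div hr hrQ.le).monotone hk).trans_eq (ceil_mul_div_self hr)

theorem card_filter_le_target {Q r : ℕ} (i : ℕ) (hr : 0 < r) (hrQ : r < Q) :
    #((range r).filter fun k => i ≤ target Q r k) = Lfun Q r i Q := by
  have hg := strictMono_ceil_mul_div hr hrQ.le
  rw [Lfun, ← card_image_of_injective _ (hg.injective.comp (add_left_injective 1))]
  congr 1
  ext x
  simp only [mem_image, mem_filter, mem_range, mem_inter, mem_Icc, Function.comp_apply]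
  constructor
  · rintro ⟨k, ⟨hk, hik⟩, rfl⟩
    rw [target_eq hrQ hk] at hik
    exact ⟨⟨hik, target_eq hrQ hk ▸ target_le hr hrQ hk⟩, k + 1, ⟨by omega, hk⟩, rfl⟩
  · rintro ⟨⟨hix, -⟩, j, ⟨hj1, hjr⟩, rfl⟩
    obtain ⟨k, rfl⟩ := Nat.exists_eq_add_of_le' hj1
    exact ⟨k, ⟨hjr, by rwa [target_eq hrQ hjr]⟩, rfl⟩

theorem sum_eCount_roots_Tr (d : ℕ) {Q r : ℕ} (i : ℕ) (hr : 0 < r) (hrQ : r < Q) :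
    ∑ k ∈ range r, eCount ((sigmaB d (target Q r k)).powerset.image (insert (rootVtx d Q k)))
      (Icc (i * d + 1) (d * (Q + 1))) = (2 ^ d - 1) * Lfun Q r i Q := by
  rw [sum_congr rfl fun k hk => eCount_image_insert_powerset_sigmaB i
    (target_le hr hrQ (mem_range.1 hk)) (rootVtx_notMem_Icc d Q k 1), ← sum_filter, sum_const,
    smul_eq_mul, card_filter_le_target i hr hrQ, mul_comm]

end

theorem Tr_density_suffix_general (d Q r : ℕ) (hd : 1 ≤ d)
    (hr0 : 0 < r) (hrQ : r < Q) (i : ℕ) (hi : 1 ≤ i) (hiQ : i ≤ Q) :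
    dens (Tr d Q r) ((Finset.Icc i Q).biUnion (sigmaB d)) =
      2 ^ d + ((2 : ℝ) ^ d - 1) * (Lfun Q r i Q : ℝ) /
        ((d : ℝ) * ((Q : ℝ) - (i : ℝ) + 1)) := by
  have hS : (Finset.Icc i Q).biUnion (sigmaB d) = Finset.Icc (i * d + 1) (d * (Q + 1)) := by
    rw [biUnion_sigmaB_Icc, mul_comm (Q + 1)]
  have hsize : d * (Q + 1) + 1 - (i * d + 1) = d * (Q - i + 1) := by
    rw [Nat.add_sub_add_right, mul_comm i, ← Nat.mul_sub, Nat.sub_add_comm hiQ]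
  have hid : d < i * d + 1 := Nat.lt_succ_of_le (Nat.le_mul_of_pos_left d hi)
  rw [dens, hS, eCount_Tr fun k => target_le hr0 hrQ, eCount_T0_Icc d Q hid,
    sum_eCount_roots_Tr d i hr0 hrQ, Nat.card_Icc, hsize]
  have hd' : (d : ℝ) ≠ 0 := Nat.cast_ne_zero.2 (by omega)
  have hiQ' : (i : ℝ) ≤ Q := by exact_mod_cast hiQ
  have hQi : (Q : ℝ) - i + 1 ≠ 0 := by linarith
  push_cast [Nat.cast_sub hiQ, Nat.one_le_two_pow]
  field_simp

/-- **Density formula, case `j = Q`.** Let `d, Q ≥ 1` and `0 < r < Q`.  For every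
`1 ≤ i ≤ Q`, the set `S = σ_i ∪ σ_{i+1} ∪ … ∪ σ_Q` satisfies
`dens_{T_r}(S) = 2^d + (2^d − 1)·L[i,Q] / (d(Q − i + 1))`. -/
theorem Tr_density_suffix (d Q r : ℕ) (hd : 1 ≤ d) (hQ : 1 ≤ Q)
    (hr0 : 0 < r) (hrQ : r < Q) (i : ℕ) (hi : 1 ≤ i) (hiQ : i ≤ Q) :
    dens (Tr d Q r) ((Finset.Icc i Q).biUnion (sigmaB d)) =
      2 ^ d + ((2 : ℝ) ^ d - 1) * (Lfun Q r i Q : ℝ) /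
        ((d : ℝ) * ((Q : ℝ) - (i : ℝ) + 1)) :=
  Tr_density_suffix_general d Q r hd hr0 hrQ i hi hiQ
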